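/- arXiv:math/9804156 — 3 statements merged into one kernel-verified Lean document; each statement's English description precedes it below -/
import Mathlib

section
/- Let δ be a limit ordinal and assume: (a) for each i<δ, I_i is a κ_i-complete ideal on a cardinal λ_i; (b) each κ_i is a regular cardinal and κ_i > Σ_{j<i} κ_j; (c) μ = sup_{i<δ} κ_i = sup_{i<δ} λ_i; (d) each I_i has a cofinal subfamily of cardinality at most μ⁺, i.e. there is Y_i ⊆ I_i with |Y_i| ≤ μ⁺ such that every member of I_i is a subset of some member of Y_i; (e) λ = μ⁺ = μ^{|δ|}. Then there is a sequence ⟨η_α : α<λ⟩ with each η_α ∈ ∏_{i<δ} λ_i such that for every unbounded X ⊆ λ, the set {i<δ : {η_α(i) : α∈X} ∈ I_i} is a bounded subset of δ; that is, ⟨η_α : α<λ⟩ is a (λ, J^bd_δ)-sequence for ⟨I_i : i<δ⟩. (Lemma 1.8) -/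
set_option linter.unusedVariables false

open Cardinal Set

/-- The ideal of bounded subsets of the set of ordinals below `l` (`J^bd_l`). -/
def Jbd (l : Ordinal.{0}) : Set (Set Ordinal.{0}) :=
  {X | X ⊆ Set.Iio l ∧ ∃ b < l, ∀ x ∈ X, x < b}

/-- `I` is an ideal on the set of ordinals below `l`: it consists of subsets of `Iio l`,
contains all singletons, is closed under subsets and finite unions, and `Iio l ∉ I`. -/
def IsIdealOn (l : Ordinal.{0}) (I : Set (Set Ordinal.{0})) : Prop :=
  (∀ X ∈ I, X ⊆ Set.Iio l) ∧
  (∀ a < l, ({a} : Set Ordinal.{0}) ∈ I) ∧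
  (∀ X Y : Set Ordinal.{0}, X ⊆ Y → Y ∈ I → X ∈ I) ∧
  (∀ X Y : Set Ordinal.{0}, X ∈ I → Y ∈ I → X ∪ Y ∈ I) ∧
  Set.Iio l ∉ I

/-- `I` is `κ`-complete: it is closed under unions of fewer than `κ` of its members. -/
def IdealComplete (κ : Cardinal.{0}) (I : Set (Set Ordinal.{0})) : Prop :=
  ∀ β : Ordinal.{0}, β.card < κ → ∀ f : Ordinal.{0} → Set Ordinal.{0},
    (∀ i < β, f i ∈ I) → (⋃ i ∈ Set.Iio β, f i) ∈ I

/-- `X` is an unbounded subset of the ordinals below `l`. -/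
def UnboundedIn (l : Ordinal.{0}) (X : Set Ordinal.{0}) : Prop :=
  ∀ b < l, ∃ α ∈ X, b ≤ α

/-- The cardinal sum `Σ_{j<i} κ_j` (as a `Cardinal.{1}`). -/
def sumBelow (κ : Ordinal.{0} → Cardinal.{0}) (i : Ordinal.{0}) : Cardinal.{1} :=
  Cardinal.sum fun j : {j : Ordinal.{0} // j < i} => Cardinal.lift.{1} (κ j.1)

/-- Positivity for a finite product of ideals, where the `ℓ`-th ideal is given by its
positivity predicate `P ℓ`:  `X` is positive iff
`(∃^{P 0} x₀)(∃^{P 1} x₁) ⋯ (⟨x₀,…⟩ ∈ X)`. -/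
def SeqPos {A : Type*} : (m : ℕ) → (Fin m → (Set A → Prop)) → Set (Fin m → A) → Prop
  | 0, _, X => X.Nonempty
  | m + 1, P, X => P 0 {a | SeqPos m (fun t => P t.succ) {f | Fin.cons a f ∈ X}}

/-- `lam = tcf (∏_{i ∈ D} lamo i / Ismall)`: there is a sequence of length `lam`
of members of the product which is increasing and cofinal modulo the ideal `Ismall`. -/
def IsTcf {ι : Type*} (D : Set ι) (lamo : ι → Ordinal.{0}) (Ismall : Set (Set ι))
    (lam : Cardinal.{0}) : Prop :=
  ∃ F : Ordinal.{0} → ι → Ordinal.{0},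
    (∀ α < lam.ord, ∀ i ∈ D, F α i < lamo i) ∧
    (∀ α β : Ordinal.{0}, α < β → β < lam.ord → {i | i ∈ D ∧ F β i ≤ F α i} ∈ Ismall) ∧
    (∀ g : ι → Ordinal.{0}, (∀ i ∈ D, g i < lamo i) →
      ∃ α < lam.ord, {i | i ∈ D ∧ F α i ≤ g i} ∈ Ismall)

/-- `C` is a club (closed unbounded) subset of the ordinals below `l`. -/
def IsClubIn (C : Set Ordinal.{0}) (l : Ordinal.{0}) : Prop :=
  C ⊆ Set.Iio l ∧ (∀ b < l, ∃ c ∈ C, b < c) ∧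
  ∀ d : Ordinal.{0}, d < l → Order.IsSuccLimit d → sSup (C ∩ Set.Iio d) = d → d ∈ C

open Classical in
/-- The restriction of `h` to `S` (with value `0` off `S`). -/
noncomputable def restrictTo (S : Set Ordinal.{0}) (h : Ordinal.{0} → Ordinal.{0}) :
    Ordinal.{0} → Ordinal.{0} :=
  fun j => if j ∈ S then h j else 0

/-- The ideal of bounded subsets of a set `u` of ordinals. -/
def JbdWithin (u : Set Ordinal.{0}) : Set (Set Ordinal.{0}) :=
  {S | S ⊆ u ∧ ∃ b ∈ u, ∀ x ∈ S, x < b}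

/-- `l` is a sequence of length `≤ n` with `k`-th entry `< lam k` (an element of a
partial product `∏_{k<m} lam k`, `m ≤ n`). -/
def GoodList (n : ℕ) (lam : ℕ → Cardinal.{0}) (l : List Ordinal.{0}) : Prop :=
  l.length ≤ n ∧ ∀ (k : ℕ) (h : k < l.length), l.get ⟨k, h⟩ < (lam k).ord

/-- `[λ]^n`: the `n`-element subsets of the ordinals below `l`. -/
def nSubsets (l : Ordinal.{0}) (n : ℕ) : Set (Finset Ordinal.{0}) :=
  {s | s.card = n ∧ ∀ x ∈ s, x < l}

/-- `J^{n,ε}_λ`: sets `A ⊆ [λ]^n` such that there is no `w ⊆ λ` of order type `ε`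
(given by its increasing enumeration `e`) with `[w]^n ⊆ A`. -/
def ERJ (l : Ordinal.{0}) (n : ℕ) (ε : Ordinal.{0}) : Set (Set (Finset Ordinal.{0})) :=
  {A | A ⊆ nSubsets l n ∧
    ¬ ∃ e : Ordinal.{0} → Ordinal.{0},
      (∀ i < ε, e i < l) ∧ (∀ i j : Ordinal.{0}, i < j → j < ε → e i < e j) ∧
      ∀ s : Finset Ordinal.{0}, s.card = n → (∀ x ∈ s, ∃ i < ε, e i = x) → s ∈ A}

/-- `I^{n,ε}_{λ,μ}`: unions of fewer than `μ` members of `J^{n,ε}_λ`. -/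
def ERI (l : Ordinal.{0}) (n : ℕ) (ε : Ordinal.{0}) (μ : Cardinal.{0}) :
    Set (Set (Finset Ordinal.{0})) :=
  {A | ∃ (β : Ordinal.{0}) (f : Ordinal.{0} → Set (Finset Ordinal.{0})),
        β.card < μ ∧ (∀ i < β, f i ∈ ERJ l n ε) ∧ A = ⋃ i ∈ Set.Iio β, f i}

/-- The partition relation `λ → (ε)^n_χ`: every colouring of `[λ]^n` by `χ` colours is
constant on `[w]^n` for some `w ⊆ λ` of order type `ε`. -/
def ArrowRel (l : Ordinal.{0}) (ε : Ordinal.{0}) (n : ℕ) (χ : Cardinal.{0}) : Prop :=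
  ∀ c : Finset Ordinal.{0} → Ordinal.{0},
    (∀ s ∈ nSubsets l n, c s < χ.ord) →
    ∃ e : Ordinal.{0} → Ordinal.{0},
      (∀ i < ε, e i < l) ∧ (∀ i j : Ordinal.{0}, i < j → j < ε → e i < e j) ∧
      ∃ γ : Ordinal.{0}, ∀ s : Finset Ordinal.{0},
        s.card = n → (∀ x ∈ s, ∃ i < ε, e i = x) → c s = γ

/-- A subset `Y` of a Boolean algebra is independent. -/
def IndepSet {B : Type*} [BooleanAlgebra B] (Y : Set B) : Prop :=
  ∀ u v : Finset B, ↑u ⊆ Y → ↑v ⊆ Y → Disjoint u v → (u.Nonempty ∨ v.Nonempty) →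
    u.inf id ⊓ v.inf (fun b => bᶜ) ≠ ⊥

/-- The Boolean algebra `B` satisfies the `κ`-cc: there is no family of `κ` many
pairwise disjoint nonzero elements. -/
def HasCC (κ : Cardinal.{0}) (B : Type) [BooleanAlgebra B] : Prop :=
  ¬ ∃ S : Set B, Cardinal.mk S = κ ∧ (⊥ : B) ∉ S ∧ S.Pairwise (fun a b => a ⊓ b = ⊥)

/-- Membership in the free Boolean algebra `FBA(ι)`, realized as the Boolean
subalgebra of the power-set algebra of `ι → Bool` generated by the sets
`X_a = {f | f a = true}`. -/
inductive FBAmem (ι : Type) : Set (ι → Bool) → Prop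
  | gen (a : ι) : FBAmem ι {f | f a = true}
  | bot : FBAmem ι ∅
  | compl (s : Set (ι → Bool)) : FBAmem ι s → FBAmem ι sᶜ
  | union (s t : Set (ι → Bool)) : FBAmem ι s → FBAmem ι t → FBAmem ι (s ∪ t)

/-- Lemma 1.8. -/
theorem lemma_1_8
    (δ : Ordinal.{0}) (hδlim : Order.IsSuccLimit δ)
    (κ lam_ : Ordinal.{0} → Cardinal.{0}) (I : Ordinal.{0} → Set (Set Ordinal.{0}))
    (μ lam : Cardinal.{0})
    -- (a) each `I i` is a `κ i`-complete ideal on the cardinal `lam_ i`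
    (hIdeal : ∀ i < δ, IsIdealOn ((lam_ i).ord) (I i))
    (hCompl : ∀ i < δ, IdealComplete (κ i) (I i))
    -- (b) each `κ i` is regular and `κ i > Σ_{j<i} κ j`
    (hReg : ∀ i < δ, (κ i).IsRegular)
    (hSum : ∀ i < δ, sumBelow κ i < Cardinal.lift.{1} (κ i))
    -- (c) `μ = sup_{i<δ} κ i = sup_{i<δ} lam_ i`
    (hμκub : ∀ i < δ, κ i ≤ μ)
    (hμκlub : ∀ c : Cardinal.{0}, (∀ i < δ, κ i ≤ c) → μ ≤ c)
    (hμlamub : ∀ i < δ, lam_ i ≤ μ)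
    (hμlamlub : ∀ c : Cardinal.{0}, (∀ i < δ, lam_ i ≤ c) → μ ≤ c)
    -- (d) each `I i` has a cofinal subfamily of cardinality at most `μ⁺`
    (hcof : ∀ i < δ, ∃ g : Ordinal.{0} → Set Ordinal.{0},
      ∀ X ∈ I i, ∃ j < (Order.succ μ).ord, g j ∈ I i ∧ X ⊆ g j)
    -- (e) `λ = μ⁺ = μ^{|δ|}`
    (hlam1 : lam = Order.succ μ) (hlam2 : lam = μ ^ δ.card) :
    -- there is a `(λ, J^bd_δ)`-sequence for `⟨I i : i < δ⟩`
    ∃ η : Ordinal.{0} → Ordinal.{0} → Ordinal.{0},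
      (∀ α < lam.ord, ∀ i < δ, η α i < (lam_ i).ord) ∧
      ∀ X : Set Ordinal.{0}, X ⊆ Set.Iio lam.ord → UnboundedIn lam.ord X →
        {i | i < δ ∧ {y | ∃ α ∈ X, η α i = y} ∈ I i} ∈ Jbd δ := by
  
  classical
  -- basic facts
  have hδ0 : (0:Ordinal) < δ := hδlim.pos
  have hμinf : ℵ₀ ≤ μ := le_trans (hReg 0 hδ0).aleph0_le (hμκub 0 hδ0)
  have hδcard : ℵ₀ ≤ δ.card := by
    have h2 := Ordinal.card_le_card (Ordinal.omega0_le_of_isSuccLimit hδlim)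
    simpa using h2
  have hlaminf : ℵ₀ ≤ lam := by
    rw [hlam1]; exact hμinf.trans (Order.le_succ μ)
  have hlamlim : Order.IsSuccLimit lam.ord := Cardinal.isSuccLimit_ord hlaminf
  have hlam0 : (0:Ordinal) < lam.ord := hlamlim.pos
  -- κ is strictly increasing
  have hκlt : ∀ i < δ, ∀ j < i, κ j < κ i := by
    intro i hi j hj
    have h1 : Cardinal.lift.{1} (κ j) ≤ sumBelow κ i :=
      Cardinal.le_sum.{1,1} (fun j : {j : Ordinal // j < i} => Cardinal.lift.{1} (κ j.1)) ⟨j, hj⟩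
    exact Cardinal.lift_lt.mp (h1.trans_lt (hSum i hi))
  -- card i < κ i
  have hcardκ : ∀ i < δ, i.card < κ i := by
    intro i hi
    have h1 : Cardinal.sum (fun _ : {j : Ordinal // j < i} => (1 : Cardinal.{1})) ≤ sumBelow κ i := by
      refine Cardinal.sum_le_sum _ _ (fun j => ?_)
      exact Cardinal.one_le_iff_ne_zero.mpr
        (by simpa using (hReg j.1 (lt_trans j.2 hi)).pos.ne')
    rw [Cardinal.sum_const'] at h1
    have h2 : #{j : Ordinal.{0} // j < i} = Cardinal.lift.{1} i.card := Ordinal.mk_Iio_ordinal i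
    rw [mul_one, h2] at h1
    exact Cardinal.lift_lt.mp (h1.trans_lt (hSum i hi))
  -- every ordinal below μ.ord is below some (κ i).ord
  have hcover : ∀ x < μ.ord, ∃ i < δ, x < (κ i).ord := by
    intro x hx
    by_contra hcon
    push_neg at hcon
    have h1 : μ ≤ x.card := hμκlub _ (fun i hi => Cardinal.ord_le.mp (hcon i hi))
    exact absurd hx (not_lt.mpr ((Cardinal.ord_le_ord.mpr h1).trans (Cardinal.ord_card_le x)))
  -- empty set is in each ideal
  have hempty : ∀ i < δ, (∅ : Set Ordinal.{0}) ∈ I i := by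
    intro i hi
    have h0 : (0 : Ordinal.{0}).card < κ i := by
      simpa using (hReg i hi).pos
    have h1 := hCompl i hi 0 h0 (fun _ => ∅)
      (fun j hj => absurd hj (not_lt_of_ge (zero_le (a := j))))
    have h2 : (⋃ j ∈ Set.Iio (0 : Ordinal.{0}), (fun _ => (∅ : Set Ordinal.{0})) j) = ∅ := by
      ext y; simp
    rwa [h2] at h1
  -- cofinal families
  choose G hG using hcof
  have hA : ∃ A : Ordinal.{0} → Ordinal.{0} → Set Ordinal.{0},
      (∀ i, i < δ → ∀ ζ, A i ζ ∈ I i) ∧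
      (∀ i, i < δ → ∀ X ∈ I i, ∃ ζ < lam.ord, X ⊆ A i ζ) := by
    refine ⟨fun i ζ => if h : ∃ hi : i < δ, G i hi ζ ∈ I i then G i h.choose ζ else ∅, ?_, ?_⟩
    · intro i hi ζ
      by_cases h : ∃ hi : i < δ, G i hi ζ ∈ I i
      · dsimp only; rw [dif_pos h]; exact h.choose_spec
      · dsimp only; rw [dif_neg h]; exact hempty i hi
    · intro i hi X hX
      obtain ⟨ζ, hζ, hmem, hsub⟩ := hG i hi X hX
      refine ⟨ζ, by rwa [hlam1], ?_⟩
      have h : ∃ hi : i < δ, G i hi ζ ∈ I i := ⟨hi, hmem⟩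
      dsimp only; rw [dif_pos h]
      exact hsub
  obtain ⟨A, hAmem, hAcof⟩ := hA
  -- enumeration of all δ-sequences of ordinals below lam.ord
  have hpow : lam ^ δ.card = lam := by
    rw [hlam2, ← Cardinal.power_mul, Cardinal.mul_eq_self hδcard]
  have hmkT : #(↥(Set.Iio δ) → ↥(Set.Iio lam.ord)) = #(↥(Set.Iio lam.ord)) := by
    rw [Cardinal.mk_arrow, Ordinal.mk_Iio_ordinal, Ordinal.mk_Iio_ordinal,
      Cardinal.lift_id, Cardinal.lift_id, Cardinal.card_ord, ← Cardinal.lift_power, hpow]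
  obtain ⟨s⟩ := Cardinal.eq.mp hmkT
  have hC : ∃ C : Ordinal.{0} → Ordinal.{0} → Ordinal.{0},
      (∀ c : Ordinal.{0} → Ordinal.{0}, (∀ i < δ, c i < lam.ord) →
        ∃ β < lam.ord, ∀ i < δ, C β i = c i) := by
    refine ⟨fun β i => if hβ : β < lam.ord then
      (if hi : i < δ then ((s.symm ⟨β, hβ⟩) ⟨i, hi⟩ : Ordinal.{0}) else 0) else 0, ?_⟩
    intro c hc
    set t : ↥(Set.Iio δ) → ↥(Set.Iio lam.ord) := fun i => ⟨c i.1, hc i.1 i.2⟩ with ht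
    refine ⟨(s t).1, (s t).2, ?_⟩
    intro i hi
    dsimp only
    have hst : ((s t : ↥(Set.Iio lam.ord)) : Ordinal.{0}) < lam.ord := (s t).2
    rw [dif_pos hst, dif_pos hi]
    have h1 : s.symm ⟨((s t) : ↥(Set.Iio lam.ord)).1, (s t).2⟩ = t := by
      have : (⟨((s t) : ↥(Set.Iio lam.ord)).1, (s t).2⟩ : ↥(Set.Iio lam.ord)) = s t := rfl
      rw [this, Equiv.symm_apply_apply]
    rw [h1]
  obtain ⟨C, hCsurj⟩ := hC
  -- injections from Iio α into Iio μ.ord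
  have hH : ∀ α : Ordinal.{0}, α < lam.ord → ∃ h : Ordinal.{0} → Ordinal.{0},
      (∀ β < α, h β < μ.ord) ∧ ∀ β₁ < α, ∀ β₂ < α, h β₁ = h β₂ → β₁ = β₂ := by
    intro α hα
    have hcard : α.card ≤ μ := by
      have h1 : α.card < lam := Cardinal.lt_ord.mp hα
      rw [hlam1] at h1
      exact Order.lt_succ_iff.mp h1
    have hle : #(↥(Set.Iio α)) ≤ #(↥(Set.Iio μ.ord)) := by
      rw [Ordinal.mk_Iio_ordinal, Ordinal.mk_Iio_ordinal, Cardinal.card_ord]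
      exact Cardinal.lift_le.mpr hcard
    obtain ⟨e⟩ := Cardinal.le_def _ _ |>.mp hle
    refine ⟨fun β => if hβ : β < α then (e ⟨β, hβ⟩).1 else 0, ?_, ?_⟩
    · intro β hβ
      dsimp only; rw [dif_pos hβ]
      exact (e ⟨β, hβ⟩).2
    · intro β₁ h₁ β₂ h₂ heq
      dsimp only at heq
      rw [dif_pos h₁, dif_pos h₂] at heq
      have := e.injective (Subtype.ext heq)
      exact congrArg Subtype.val this
  choose! h hh1 hh2 using hH
  -- surjections onto initial segments, for completeness bounds
  have hP : ∀ i : Ordinal.{0}, i < δ → ∃ p : i.card.out → Ordinal.{0},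
      (∀ t, p t < i) ∧ ∀ j < i, ∃ t, p t = j := by
    intro i hi
    have hne : Nonempty ((i.card.out) ≃ ↥(Set.Iio i)) := by
      rw [← Cardinal.lift_mk_eq']
      rw [Cardinal.mk_out, Ordinal.mk_Iio_ordinal]
      simp
    obtain ⟨e⟩ := hne
    refine ⟨fun t => (e t).1, fun t => (e t).2, fun j hj => ⟨e.symm ⟨j, hj⟩, by simp⟩⟩
  choose! p hp1 hp2 using hP
  set σ : Ordinal.{0} → Ordinal.{0} := fun i => ⨆ t : i.card.out, (κ (p i t)).ord with hσ
  have hσlt : ∀ i < δ, σ i < (κ i).ord := by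
    intro i hi
    refine Ordinal.iSup_lt_ord ?_ (fun t => Cardinal.ord_lt_ord.mpr (hκlt i hi _ (hp1 i hi t)))
    rw [Cardinal.mk_out, (hReg i hi).cof_eq]
    exact hcardκ i hi
  have hσge : ∀ i < δ, ∀ j < i, (κ j).ord ≤ σ i := by
    intro i hi j hj
    obtain ⟨t, ht⟩ := hp2 i hi j hj
    rw [← ht]
    exact le_ciSup (Ordinal.bddAbove_range _) t
  -- the "bad" sets
  set F : Ordinal.{0} → Ordinal.{0} → Ordinal.{0} → Set Ordinal.{0} := fun α i x =>
    if hx : ∃ β, β < α ∧ h α β = x ∧ ∃ j < i, h α β < (κ j).ord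
    then A i (C hx.choose i) else ∅ with hF
  set B : Ordinal.{0} → Ordinal.{0} → Set Ordinal.{0} :=
    fun α i => ⋃ x ∈ Set.Iio (σ i), F α i x with hB
  have hBmem : ∀ α, ∀ i < δ, B α i ∈ I i := by
    intro α i hi
    refine hCompl i hi (σ i) (Cardinal.lt_ord.mp (hσlt i hi)) (F α i) ?_
    intro x hx
    by_cases hx2 : ∃ β, β < α ∧ h α β = x ∧ ∃ j < i, h α β < (κ j).ord
    · simp only [hF, dif_pos hx2]; exact hAmem i hi _
    · simp only [hF, dif_neg hx2]; exact hempty i hi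
  have hBsup : ∀ α < lam.ord, ∀ i < δ, ∀ β < α,
      (∃ j < i, h α β < (κ j).ord) → A i (C β i) ⊆ B α i := by
    intro α hα i hi β hβ hj
    have hx : ∃ β', β' < α ∧ h α β' = h α β ∧ ∃ j < i, h α β' < (κ j).ord := ⟨β, hβ, rfl, hj⟩
    have hch : hx.choose = β := by
      obtain ⟨h1, h2, _⟩ := hx.choose_spec
      exact hh2 α hα _ h1 _ hβ h2
    have hFx : F α i (h α β) = A i (C β i) := by
      simp only [hF, dif_pos hx, hch]
    have hxσ : h α β < σ i := by
      obtain ⟨j, hjlt, hjκ⟩ := hj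
      exact lt_of_lt_of_le hjκ (hσge i hi j hjlt)
    rw [← hFx]
    exact Set.subset_biUnion_of_mem hxσ
  -- choose η avoiding the bad sets
  have hη : ∀ α, α < lam.ord → ∀ i, i < δ → ∃ y, y < (lam_ i).ord ∧ y ∉ B α i := by
    intro α hα i hi
    by_contra hcon
    push_neg at hcon
    obtain ⟨hsub, hsingle, hdown, hun, hnot⟩ := hIdeal i hi
    exact hnot (hdown _ _ (fun y hy => hcon y hy) (hBmem α i hi))
  set η : Ordinal.{0} → Ordinal.{0} → Ordinal.{0} := fun α i =>
    if hc : α < lam.ord ∧ i < δ then (hη α hc.1 i hc.2).choose else 0 with hηdef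
  refine ⟨η, ?_, ?_⟩
  · intro α hα i hi
    simp only [hηdef, dif_pos (And.intro hα hi)]
    exact (hη α hα i hi).choose_spec.1
  -- main verification
  intro X hXsub hXunb
  refine ⟨fun i hi => hi.1, ?_⟩
  -- pick the code c for X
  set c : Ordinal.{0} → Ordinal.{0} := fun i =>
    if hc : i < δ ∧ {y | ∃ α ∈ X, η α i = y} ∈ I i
    then (hAcof i hc.1 _ hc.2).choose else 0 with hcdef
  have hcbound : ∀ i < δ, c i < lam.ord := by
    intro i hi
    by_cases hc : i < δ ∧ {y | ∃ α ∈ X, η α i = y} ∈ I i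
    · simp only [hcdef, dif_pos hc]
      exact (hAcof i hc.1 _ hc.2).choose_spec.1
    · simp only [hcdef, dif_neg hc]
      exact hlam0
  obtain ⟨β, hβlam, hβC⟩ := hCsurj c hcbound
  obtain ⟨α, hαX, hαβ⟩ := hXunb (β + 1) (hlamlim.succ_lt hβlam)
  have hαlam : α < lam.ord := hXsub hαX
  have hβα : β < α := lt_of_lt_of_le (by rw [Ordinal.add_one_eq_succ]; exact Order.lt_succ β) hαβ
  obtain ⟨i₀, hi₀δ, hxκ⟩ := hcover (h α β) (hh1 α hαlam β hβα)
  refine ⟨i₀ + 1, hδlim.succ_lt hi₀δ, ?_⟩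
  intro i hiS
  obtain ⟨hiδ, hiI⟩ := hiS
  by_contra hcon
  push_neg at hcon
  have hi₀i : i₀ < i := lt_of_lt_of_le (by rw [Ordinal.add_one_eq_succ]; exact Order.lt_succ i₀) hcon
  -- β's obligation is active at level i
  have hsub1 : A i (C β i) ⊆ B α i := hBsup α hαlam i hiδ β hβα ⟨i₀, hi₀i, hxκ⟩
  -- the image of X at i is contained in A i (c i) = A i (C β i)
  have hc2 : i < δ ∧ {y | ∃ α ∈ X, η α i = y} ∈ I i := ⟨hiδ, hiI⟩
  have hsub2 : {y | ∃ α ∈ X, η α i = y} ⊆ A i (c i) := by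
    have h1 : c i = (hAcof i hc2.1 _ hc2.2).choose := by simp only [hcdef, dif_pos hc2]
    rw [h1]
    exact (hAcof i hc2.1 _ hc2.2).choose_spec.2
  have hmem1 : η α i ∈ {y | ∃ α ∈ X, η α i = y} := ⟨α, hαX, rfl⟩
  have hmem2 : η α i ∈ B α i := by
    apply hsub1
    rw [hβC i hiδ]
    exact hsub2 hmem1
  have hnot : η α i ∉ B α i := by
    simp only [hηdef, dif_pos (And.intro hαlam hiδ)]
    exact (hη α hαlam i hiδ).choose_spec.2
  exact hnot hmem2
end

section
/- Let μ be a strong limit singular cardinal of cofinality ℵ₀ and let λ = μ⁺ = 2^μ. Let (Ω,𝒜,P) be a probability space carrying an independent family ⟨x_s : s∈S⟩ of measurable events, each of probability 1/2, with |S| ≥ μ. Then there are measurable sets a_α (α<λ) with P(a_α) > 0 for each α<λ, such that for every X ⊆ λ of cardinality λ there are n < ω and α_1 < ⋯ < α_n in X with P(a_{α_1} ∩ ⋯ ∩ a_{α_n}) = 0. (Application 1.13) -/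
set_option linter.unusedVariables false

open Cardinal Set

open MeasureTheory in
lemma aux_indep_compl {Ω : Type} [MeasurableSpace Ω] (P : Measure Ω)
    [IsProbabilityMeasure P] {S : Type} (x : S → Set Ω)
    (hmeas : ∀ s, MeasurableSet (x s)) (hhalf : ∀ s, P (x s) = 1/2)
    (hindep : ∀ F : Finset S, F.Nonempty → P (⋂ s ∈ F, x s) = ∏ s ∈ F, P (x s)) :
    ∀ (G F : Finset S), Disjoint F G →
      P ((⋂ s ∈ F, x s) ∩ (⋂ s ∈ G, (x s)ᶜ)) = (2⁻¹ : ENNReal) ^ (F.card + G.card) := by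
  classical
  intro G
  induction G using Finset.induction_on with
  | empty =>
      intro F _
      have h1 : (⋂ s ∈ (∅ : Finset S), (x s)ᶜ) = Set.univ := by simp
      rw [h1, Set.inter_univ]
      rcases Finset.eq_empty_or_nonempty F with hF | hF
      · subst hF; simp
      · rw [hindep F hF]
        have : ∀ s ∈ F, P (x s) = (2⁻¹ : ENNReal) := by
          intro s _; rw [hhalf s, one_div]
        rw [Finset.prod_congr rfl this, Finset.prod_const]
        simp
  | @insert t G htG ih =>
      intro F hdisj
      have htF : t ∉ F := by
        intro h
        exact (Finset.disjoint_left.mp hdisj h) (Finset.mem_insert_self t G)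
      have hFG : Disjoint F G := by
        refine Finset.disjoint_left.mpr ?_
        intro a ha hb
        exact (Finset.disjoint_left.mp hdisj ha) (Finset.mem_insert_of_mem hb)
      have hFtG : Disjoint (insert t F) G := by
        refine Finset.disjoint_left.mpr ?_
        intro a ha hb
        rcases Finset.mem_insert.mp ha with rfl | ha'
        · exact htG hb
        · exact (Finset.disjoint_left.mp hFG ha') hb
      set B := (⋂ s ∈ F, x s) ∩ (⋂ s ∈ G, (x s)ᶜ) with hB
      have hmeasB : MeasurableSet B := by
        apply MeasurableSet.inter
        · exact Finset.measurableSet_biInter F (fun b _ => hmeas b)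
        · exact Finset.measurableSet_biInter G (fun b _ => (hmeas b).compl)
      have hset : (⋂ s ∈ F, x s) ∩ (⋂ s ∈ insert t G, (x s)ᶜ) = B \ (B ∩ x t) := by
        ext ω
        simp only [hB, Set.mem_inter_iff, Set.mem_iInter, Set.mem_diff, Set.mem_compl_iff,
          Finset.mem_insert]
        constructor
        · rintro ⟨h1, h2⟩
          have hnt : ω ∉ x t := h2 t (Or.inl rfl)
          exact ⟨⟨h1, fun s hs => h2 s (Or.inr hs)⟩, fun hh => hnt hh.2⟩
        · rintro ⟨⟨h1, h2⟩, h3⟩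
          refine ⟨h1, ?_⟩
          rintro s (rfl | hs)
          · intro hxs; exact h3 ⟨⟨h1, h2⟩, hxs⟩
          · exact h2 s hs
      have hset2 : B ∩ x t = (⋂ s ∈ insert t F, x s) ∩ (⋂ s ∈ G, (x s)ᶜ) := by
        ext ω
        simp only [hB, Set.mem_inter_iff, Set.mem_iInter, Finset.mem_insert]
        constructor
        · rintro ⟨⟨h1, h2⟩, h3⟩
          exact ⟨fun s hs => by rcases hs with rfl | hs; exact h3; exact h1 s hs, h2⟩
        · rintro ⟨h1, h2⟩
          exact ⟨⟨fun s hs => h1 s (Or.inr hs), h2⟩, h1 t (Or.inl rfl)⟩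
      have hPB : P B = (2⁻¹ : ENNReal) ^ (F.card + G.card) := ih F hFG
      have hPBt : P (B ∩ x t) = (2⁻¹ : ENNReal) ^ (F.card + 1 + G.card) := by
        rw [hset2]
        have := ih (insert t F) hFtG
        rwa [Finset.card_insert_of_notMem htF] at this
      rw [hset, measure_diff (Set.inter_subset_left)
        ((hmeasB.inter (hmeas t)).nullMeasurableSet) (measure_ne_top P _), hPB, hPBt]
      rw [Finset.card_insert_of_notMem htG]
      have harr : F.card + 1 + G.card = (F.card + G.card) + 1 := by omega
      have harr2 : F.card + (G.card + 1) = (F.card + G.card) + 1 := by omega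
      rw [harr, harr2]
      set m := F.card + G.card
      have hne : (2⁻¹ : ENNReal) ^ m ≠ ⊤ := by
        apply ENNReal.pow_ne_top
        simp
      have hkey : (2⁻¹ : ENNReal) ^ m = (2⁻¹:ENNReal) ^ (m+1) + (2⁻¹:ENNReal) ^ (m+1) := by
        rw [pow_succ]
        rw [← mul_add ((2⁻¹:ENNReal)^m)]
        have : (2⁻¹ : ENNReal) + 2⁻¹ = 1 := ENNReal.inv_two_add_inv_two
        rw [this, mul_one]
      rw [hkey]
      rw [ENNReal.add_sub_cancel_right (by apply ENNReal.pow_ne_top; simp)]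

open MeasureTheory in
/-- Application 1.13. -/
theorem application_1_13
    (μ lam : Cardinal.{0})
    (hSL : μ.IsStrongLimit) (hcof : μ.ord.cof = ℵ₀) (hunc : ℵ₀ < μ)
    (hlam1 : lam = Order.succ μ) (hlam2 : lam = 2 ^ μ)
    (Ω : Type) [MeasurableSpace Ω] (P : MeasureTheory.Measure Ω)
    [MeasureTheory.IsProbabilityMeasure P]
    (S : Type) (hS : μ ≤ Cardinal.mk S)
    (x : S → Set Ω) (hmeas : ∀ s, MeasurableSet (x s))
    (hhalf : ∀ s, P (x s) = 1/2)
    (hindep : ∀ F : Finset S, F.Nonempty → P (⋂ s ∈ F, x s) = ∏ s ∈ F, P (x s)) :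
    ∃ a : Ordinal.{0} → Set Ω,
      (∀ α < lam.ord, MeasurableSet (a α) ∧ 0 < P (a α)) ∧
      ∀ X : Set Ordinal.{0}, X ⊆ Set.Iio lam.ord →
        Cardinal.mk X = Cardinal.lift.{1} lam →
        ∃ (n : ℕ) (g : Fin (n + 1) → Ordinal.{0}), StrictMono g ∧ (∀ k, g k ∈ X) ∧
          P (⋂ k, a (g k)) = 0 := by
  classical
  have hμinf : ℵ₀ ≤ μ := hunc.le
  have hlaminf : ℵ₀ ≤ lam := by
    rw [hlam1]; exact hμinf.trans (Order.le_succ μ)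
  have hlamlim : Order.IsSuccLimit lam.ord := Cardinal.isSuccLimit_ord hlaminf
  -- index type of size μ
  set ι : Type := Quotient.out μ with hιdef
  have hι : Cardinal.mk ι = μ := Cardinal.mk_out μ
  have hιinf : Infinite ι := Cardinal.infinite_iff.mpr (by rw [hι]; exact hμinf)
  -- embedding into S
  obtain ⟨emb⟩ : Nonempty (ι ↪ S) := by
    rw [← Cardinal.le_def, hι]; exact hS
  -- measure of true/false cylinders
  have hmapset : ∀ (J : Finset ι) (f : S → Set Ω),
      (⋂ s ∈ J.map emb, f s) = ⋂ i ∈ J, f (emb i) := by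
    intro J f; ext ω
    simp only [Set.mem_iInter, Finset.mem_map]
    constructor
    · intro hmem i hi
      exact hmem (emb i) ⟨i, hi, rfl⟩
    · rintro hmem s ⟨i, hi, rfl⟩
      exact hmem i hi
  have Pt : ∀ J : Finset ι, P (⋂ i ∈ J, x (emb i)) = (2⁻¹ : ENNReal) ^ J.card := by
    intro J
    have := aux_indep_compl P x hmeas hhalf hindep ∅ (J.map emb) (Finset.disjoint_empty_right _)
    simp only [Finset.card_empty, add_zero, Finset.card_map] at this
    rw [← hmapset J x]
    rw [← this]
    congr 1
    simp
  have Pf : ∀ J : Finset ι, P (⋂ i ∈ J, (x (emb i))ᶜ) = (2⁻¹ : ENNReal) ^ J.card := by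
    intro J
    have := aux_indep_compl P x hmeas hhalf hindep (J.map emb) ∅ (Finset.disjoint_empty_left _)
    simp only [Finset.card_empty, zero_add, Finset.card_map] at this
    have h2 : (⋂ s ∈ J.map emb, (x s)ᶜ) = ⋂ i ∈ J, (x (emb i))ᶜ := hmapset J (fun s => (x s)ᶜ)
    rw [← h2]
    rw [← this]
    congr 1
    simp
  -- cardinality of the coding space
  have hZcard : Cardinal.mk (ι → Bool) = lam := by
    rw [hlam2, ← hι, ← Cardinal.mk_bool, Cardinal.power_def]
  -- injection of the coding space into Iio lam.ord
  obtain ⟨eqv⟩ : Nonempty (ULift.{1} (ι → Bool) ≃ ↥(Set.Iio lam.ord)) := by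
    rw [← Cardinal.eq]
    rw [Cardinal.mk_uLift, hZcard, Ordinal.mk_Iio_ordinal, Cardinal.card_ord]
  set ξfun : (ι → Bool) → ↥(Set.Iio lam.ord) := fun z => eqv (ULift.up z) with hξdef
  have hξinj : Function.Injective ξfun := by
    intro z w hzw
    have := eqv.injective hzw
    exact congrArg ULift.down this
  -- the cofinal ω-sequence in μ.ord
  obtain ⟨ιc, fc, hlsub, hcard⟩ := Ordinal.exists_lsub_cof μ.ord
  rw [hcof] at hcard
  obtain ⟨ec⟩ : Nonempty (ℕ ≃ ιc) := by
    rw [← Cardinal.eq, Cardinal.mk_nat, hcard]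
  set g : ℕ → Ordinal.{0} := fun n => Order.succ (fc (ec n)) with hgdef
  have hμlim : Order.IsSuccLimit μ.ord := Cardinal.isSuccLimit_ord hμinf
  have hg1 : ∀ n, g n < μ.ord := by
    intro n
    have : fc (ec n) < μ.ord := by rw [← hlsub]; exact Ordinal.lt_lsub fc (ec n)
    exact hμlim.succ_lt this
  have hg2 : ∀ o < μ.ord, ∃ n, o < g n := by
    intro o ho
    rw [← hlsub] at ho
    obtain ⟨i, hi⟩ := Ordinal.lt_lsub_iff.mp ho
    refine ⟨ec.symm i, ?_⟩
    rw [hgdef]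
    simp only [Equiv.apply_symm_apply]
    exact Order.lt_succ_iff.mpr hi
  have hgcard : ∀ n, (g n).card < μ := fun n => Cardinal.lt_ord.mp (hg1 n)
  -- pigeonhole: a small family of points is constant on an infinite set of coordinates
  have pigeon : ∀ (T : Type) (κ : Cardinal.{0}), κ < μ → Cardinal.mk T ≤ κ →
      ∀ cm : ι → (T → Bool), ∃ v, (cm ⁻¹' {v}).Infinite := by
    intro T κ hκ hT cm
    by_contra hcon
    push_neg at hcon
    have hfin : ∀ v, (cm ⁻¹' {v}).Finite := fun v => hcon v
    have huniv : (Set.univ : Set ι) = ⋃ v, cm ⁻¹' {v} := by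
      ext i; simp
    have h1 : Cardinal.mk ι ≤ Cardinal.mk (T → Bool) * ⨆ v, Cardinal.mk ↥(cm ⁻¹' {v}) := by
      calc Cardinal.mk ι = Cardinal.mk ↥(Set.univ : Set ι) := (Cardinal.mk_univ).symm
      _ = Cardinal.mk ↥(⋃ v, cm ⁻¹' {v}) := by rw [← huniv]
      _ ≤ _ := Cardinal.mk_iUnion_le _
    have h3 : (⨆ v : T → Bool, Cardinal.mk ↥(cm ⁻¹' {v})) ≤ ℵ₀ := by
      apply ciSup_le'
      intro v
      exact ((hfin v).lt_aleph0).le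
    have h5 : Cardinal.mk (T → Bool) ≤ 2 ^ κ := by
      calc Cardinal.mk (T → Bool) = (Cardinal.mk Bool) ^ (Cardinal.mk T) := (Cardinal.power_def Bool T).symm
      _ = 2 ^ (Cardinal.mk T) := by rw [Cardinal.mk_bool]
      _ ≤ 2 ^ κ := Cardinal.power_le_power_left (by norm_num) hT
    have h6 : (2 : Cardinal.{0}) ^ κ < μ := hSL.two_power_lt hκ
    have h7 : Cardinal.mk ι < μ := by
      calc Cardinal.mk ι ≤ Cardinal.mk (T → Bool) * ⨆ v, Cardinal.mk ↥(cm ⁻¹' {v}) := h1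
      _ ≤ (2 ^ κ) * ℵ₀ := mul_le_mul' h5 h3
      _ < μ := Cardinal.mul_lt_of_lt hμinf h6 hunc
    rw [hι] at h7
    exact lt_irrefl μ h7
  -- covering lemma
  have cover : ∀ A : Set (ι → Bool), Cardinal.mk ↥A ≤ μ →
      ∃ I : ℕ → Finset ι, (∀ n, (I n).card = n + 3) ∧
        ∀ z ∈ A, ∃ n, (∀ i ∈ I n, z i = true) ∨ (∀ i ∈ I n, z i = false) := by
    intro A hA
    obtain ⟨eA⟩ : Nonempty (↥A ↪ ↥(Set.Iio μ.ord)) := by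
      rw [← Cardinal.lift_mk_le']
      rw [Ordinal.mk_Iio_ordinal, Cardinal.card_ord]
      simp only [Cardinal.lift_lift]
      exact Cardinal.lift_le.mpr hA
    set q : ↥A → Ordinal.{0} := fun a0 => (eA a0 : Ordinal) with hqdef
    have hqinj : Function.Injective q := by
      intro a b hab
      exact eA.injective (Subtype.ext hab)
    have hqlt : ∀ a0, q a0 < μ.ord := fun a0 => (eA a0).2
    set An : ℕ → Set ↥A := fun n => {a0 | q a0 < g n} with hAndef
    have hAncard : ∀ n, Cardinal.mk ↥(An n) ≤ (g n).card := by
      intro n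
      have hemb : Nonempty (↥(An n) ↪ ↥(Set.Iio (g n))) := by
        refine ⟨⟨fun b => ⟨q b.1, b.2⟩, ?_⟩⟩
        intro b1 b2 h12
        have h13 := congrArg Subtype.val h12
        exact Subtype.ext (hqinj h13)
      have h14 := Cardinal.lift_mk_le'.mpr hemb
      rw [Ordinal.mk_Iio_ordinal] at h14
      simp only [Cardinal.lift_lift] at h14
      exact Cardinal.lift_le.mp h14
    have hchoice : ∀ n : ℕ, ∃ J : Finset ι, J.card = n + 3 ∧
        ∀ i ∈ J, ∀ j ∈ J, ∀ a0 : ↥A, a0 ∈ An n → (a0 : ι → Bool) i = (a0 : ι → Bool) j := by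
      intro n
      obtain ⟨v, hv⟩ := pigeon ↥(An n) ((g n).card) (hgcard n) (hAncard n)
        (fun i => fun b => (b.1 : ι → Bool) i)
      obtain ⟨J, hJsub, hJcard⟩ := hv.exists_subset_card_eq (n + 3)
      refine ⟨J, hJcard, ?_⟩
      intro i hi j hj a0 ha0
      have hvi : (fun b : ↥(An n) => (b.1 : ι → Bool) i) = v := by simpa using hJsub hi
      have hvj : (fun b : ↥(An n) => (b.1 : ι → Bool) j) = v := by simpa using hJsub hj
      exact congrFun (hvi.trans hvj.symm) ⟨a0, ha0⟩
    choose I hIcard hIconst using hchoice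
    refine ⟨I, hIcard, ?_⟩
    intro z hz
    obtain ⟨n, hn⟩ := hg2 (q ⟨z, hz⟩) (hqlt ⟨z, hz⟩)
    refine ⟨n, ?_⟩
    have hmemAn : (⟨z, hz⟩ : ↥A) ∈ An n := hn
    have hJne : (I n).Nonempty := by
      rw [← Finset.card_pos, hIcard n]; omega
    obtain ⟨i0, hi0⟩ := hJne
    cases hb : z i0 with
    | true =>
        left; intro i hi
        have h15 := hIconst n i hi i0 hi0 ⟨z, hz⟩ hmemAn
        exact h15.trans hb
    | false =>
        right; intro i hi
        have h15 := hIconst n i hi i0 hi0 ⟨z, hz⟩ hmemAn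
        exact h15.trans hb
  -- choice of coordinates for every ordinal
  have hAcard : ∀ α : Ordinal.{0}, α < lam.ord →
      Cardinal.mk ↥{z : ι → Bool | ((ξfun z : ↥(Set.Iio lam.ord)) : Ordinal.{0}) < α} ≤ μ := by
    intro α hα
    have hemb : Nonempty (↥{z : ι → Bool | ((ξfun z : ↥(Set.Iio lam.ord)) : Ordinal.{0}) < α}
        ↪ ↥(Set.Iio α)) := by
      refine ⟨⟨fun w => ⟨((ξfun w.1 : ↥(Set.Iio lam.ord)) : Ordinal.{0}), w.2⟩, ?_⟩⟩
      intro w1 w2 h12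
      have h13 := congrArg Subtype.val h12
      exact Subtype.ext (hξinj (Subtype.ext h13))
    have h14 := Cardinal.lift_mk_le'.mpr hemb
    rw [Ordinal.mk_Iio_ordinal] at h14
    simp only [Cardinal.lift_lift] at h14
    have h15 := Cardinal.lift_le.mp h14
    refine h15.trans ?_
    have h16 : α.card < lam := Cardinal.lt_ord.mp hα
    rw [hlam1] at h16
    exact Order.lt_succ_iff.mp h16
  have main : ∀ α : Ordinal.{0}, ∃ I : ℕ → Finset ι, (∀ n, (I n).card = n + 3) ∧
      (α < lam.ord → ∀ z : ι → Bool, ((ξfun z : ↥(Set.Iio lam.ord)) : Ordinal.{0}) < α →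
        ∃ n, (∀ i ∈ I n, z i = true) ∨ (∀ i ∈ I n, z i = false)) := by
    intro α
    by_cases hα : α < lam.ord
    · obtain ⟨I, h1, h2⟩ := cover _ (hAcard α hα)
      exact ⟨I, h1, fun _ z hz => h2 z hz⟩
    · have hJ : ∀ n : ℕ, ∃ J : Finset ι, J.card = n + 3 := by
        intro n
        obtain ⟨J, _, hJc⟩ := (Set.infinite_univ (α := ι)).exists_subset_card_eq (n + 3)
        exact ⟨J, hJc⟩
      choose I hIc using hJ
      exact ⟨I, hIc, fun hcontra => absurd hcontra hα⟩
  choose I hIcard hIcover using main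
  -- coding map and the family of sets
  set h : Ω → ι → Bool := fun ω i => if ω ∈ x (emb i) then true else false with hhdef
  set UU : Ordinal.{0} → Set (ι → Bool) := fun α =>
    ⋃ n, ({z | ∀ i ∈ I α n, z i = true} ∪ {z | ∀ i ∈ I α n, z i = false}) with hUUdef
  set a : Ordinal.{0} → Set Ω := fun α => (h ⁻¹' UU α)ᶜ with hadef
  have hpre : ∀ α, h ⁻¹' UU α =
      ⋃ n, ((⋂ i ∈ I α n, x (emb i)) ∪ ⋂ i ∈ I α n, (x (emb i))ᶜ) := by
    intro α
    ext ω
    have hb1 : ∀ i, (h ω i = true ↔ ω ∈ x (emb i)) := by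
      intro i; by_cases hm : ω ∈ x (emb i) <;> simp [hhdef, hm]
    have hb2 : ∀ i, (h ω i = false ↔ ω ∉ x (emb i)) := by
      intro i; by_cases hm : ω ∈ x (emb i) <;> simp [hhdef, hm]
    simp only [Set.mem_preimage, hUUdef, Set.mem_iUnion, Set.mem_union, Set.mem_setOf_eq,
      Set.mem_iInter, Set.mem_compl_iff]
    constructor
    · rintro ⟨n, hc | hc⟩
      · exact ⟨n, Or.inl (fun i hi => (hb1 i).mp (hc i hi))⟩
      · exact ⟨n, Or.inr (fun i hi => (hb2 i).mp (hc i hi))⟩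
    · rintro ⟨n, hc | hc⟩
      · exact ⟨n, Or.inl (fun i hi => (hb1 i).mpr (hc i hi))⟩
      · exact ⟨n, Or.inr (fun i hi => (hb2 i).mpr (hc i hi))⟩
  have hmeasU : ∀ α, MeasurableSet (h ⁻¹' UU α) := by
    intro α
    rw [hpre α]
    refine MeasurableSet.iUnion (fun n => MeasurableSet.union ?_ ?_)
    · exact Finset.measurableSet_biInter _ (fun i _ => hmeas (emb i))
    · exact Finset.measurableSet_biInter _ (fun i _ => (hmeas (emb i)).compl)
  have hPU : ∀ α, P (h ⁻¹' UU α) ≤ 2⁻¹ := by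
    intro α
    rw [hpre α]
    have hterm : ∀ n : ℕ, P ((⋂ i ∈ I α n, x (emb i)) ∪ ⋂ i ∈ I α n, (x (emb i))ᶜ)
        ≤ (2⁻¹ : ENNReal) ^ (n + 2) := by
      intro n
      refine (measure_union_le _ _).trans ?_
      rw [Pt, Pf, hIcard]
      have heq : (2⁻¹ : ENNReal) ^ (n+3) + (2⁻¹ : ENNReal) ^ (n+3) = (2⁻¹ : ENNReal) ^ (n+2) := by
        rw [show n + 3 = (n+2) + 1 from rfl, pow_succ, ← mul_add,
          ENNReal.inv_two_add_inv_two, mul_one]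
      exact le_of_eq heq
    calc P (⋃ n, ((⋂ i ∈ I α n, x (emb i)) ∪ ⋂ i ∈ I α n, (x (emb i))ᶜ))
        ≤ ∑' n : ℕ, P ((⋂ i ∈ I α n, x (emb i)) ∪ ⋂ i ∈ I α n, (x (emb i))ᶜ) :=
          measure_iUnion_le _
    _ ≤ ∑' n : ℕ, (2⁻¹ : ENNReal) ^ (n + 2) := ENNReal.tsum_le_tsum hterm
    _ = 2⁻¹ := by
        have hc2 : ∀ n : ℕ, (2⁻¹ : ENNReal) ^ (n + 2) = (2⁻¹:ENNReal)^2 * 2⁻¹ ^ n := by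
          intro n; rw [pow_add, mul_comm]
        rw [tsum_congr hc2, ENNReal.tsum_mul_left, ENNReal.tsum_geometric,
          ENNReal.one_sub_inv_two]
        rw [show ((2⁻¹ : ENNReal)⁻¹ : ENNReal) = 2 by simp]
        rw [pow_two, mul_assoc, ENNReal.inv_mul_cancel two_ne_zero ENNReal.ofNat_ne_top, mul_one]
  refine ⟨a, ?_, ?_⟩
  · intro α hα
    constructor
    · exact (hmeasU α).compl
    · have hC : P (a α) = 1 - P (h ⁻¹' UU α) := prob_compl_eq_one_sub (hmeasU α)
      rw [hC]
      refine tsub_pos_iff_lt.mpr ?_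
      refine lt_of_le_of_lt (hPU α) ?_
      exact ENNReal.inv_lt_one.mpr (by norm_num)
  · intro X hXsub hXcard
    have hXunb : ∀ b, b < lam.ord → ∃ α ∈ X, b < α := by
      intro b hb
      by_contra hcon
      push_neg at hcon
      have hsub2 : X ⊆ Set.Iio (Order.succ b) := by
        intro β hβ
        exact Order.lt_succ_iff.mpr (hcon β hβ)
      have h1 : Cardinal.mk ↥X ≤ Cardinal.mk ↥(Set.Iio (Order.succ b)) :=
        Cardinal.mk_le_mk_of_subset hsub2
      rw [hXcard, Ordinal.mk_Iio_ordinal] at h1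
      have h2 : lam ≤ (Order.succ b).card := Cardinal.lift_le.mp h1
      have h3 : Order.succ b < lam.ord := hlamlim.succ_lt hb
      exact absurd h2 (not_le.mpr (Cardinal.lt_ord.mp h3))
    have hcyl : ∀ (J : Finset ι) (b : Bool), IsOpen {z : ι → Bool | ∀ i ∈ J, z i = b} := by
      intro J b
      have hset : {z : ι → Bool | ∀ i ∈ J, z i = b}
          = ⋂ i ∈ (↑J : Set ι), {z : ι → Bool | z i = b} := by
        ext z; simp
      rw [hset]
      refine Set.Finite.isOpen_biInter (Finset.finite_toSet _) ?_
      intro i _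
      have hop : {z : ι → Bool | z i = b} = (fun z : ι → Bool => z i) ⁻¹' {b} := by
        ext z; simp
      rw [hop]
      exact (continuous_apply i).isOpen_preimage _ (isOpen_discrete _)
    have hopen : ∀ β : ↥X, IsOpen (UU ↑β) := by
      intro β
      exact isOpen_iUnion (fun n => (hcyl _ true).union (hcyl _ false))
    have hcov : (Set.univ : Set (ι → Bool)) ⊆ ⋃ β : ↥X, UU ↑β := by
      intro z _
      obtain ⟨α, hαX, hlt⟩ := hXunb ((ξfun z : ↥(Set.Iio lam.ord)) : Ordinal.{0}) (ξfun z).2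
      have hα : α < lam.ord := hXsub hαX
      obtain ⟨n, hn⟩ := hIcover α hα z hlt
      refine Set.mem_iUnion.mpr ⟨⟨α, hαX⟩, ?_⟩
      refine Set.mem_iUnion.mpr ⟨n, ?_⟩
      cases hn with
      | inl hc => exact Or.inl hc
      | inr hc => exact Or.inr hc
    obtain ⟨t, ht⟩ := (isCompact_univ : IsCompact (Set.univ : Set (ι → Bool))).elim_finite_subcover
      (fun β : ↥X => UU ↑β) hopen hcov
    have htne : t.Nonempty := by
      by_contra hte
      rw [Finset.not_nonempty_iff_eq_empty] at hte
      subst hte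
      have hmm := ht (Set.mem_univ (fun _ : ι => true))
      simp at hmm
    set t' : Finset Ordinal.{0} := t.map (Function.Embedding.subtype _) with ht'def
    obtain ⟨β0, hβ0⟩ := htne
    have ht'ne : t'.Nonempty := ⟨(β0 : Ordinal.{0}), Finset.mem_map_of_mem _ hβ0⟩
    have hk : t'.card = (t'.card - 1) + 1 := by
      have := Finset.card_pos.mpr ht'ne; omega
    set iso := t'.orderIsoOfFin hk with hisodef
    refine ⟨t'.card - 1, fun j => ((iso j : ↥(↑t' : Set Ordinal.{0})) : Ordinal.{0}), ?_, ?_, ?_⟩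
    · intro j1 j2 hj
      exact Subtype.coe_lt_coe.mpr (iso.strictMono hj)
    · intro k
      have hmem : ((iso k : _) : Ordinal.{0}) ∈ t' := (iso k).2
      have hmem2 : ((iso k : _) : Ordinal.{0}) ∈ t.map (Function.Embedding.subtype _) := hmem
      obtain ⟨β, hβt, hβeq⟩ := Finset.mem_map.mp hmem2
      show ((iso k : _) : Ordinal.{0}) ∈ X
      rw [← hβeq]; exact β.2
    · have hempty : (⋂ k : Fin (t'.card - 1 + 1), a (((iso k : _) : Ordinal.{0}))) = ∅ := by
        rw [Set.eq_empty_iff_forall_notMem]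
        intro ω hω
        have hz := ht (Set.mem_univ (h ω))
        rw [Set.mem_iUnion₂] at hz
        obtain ⟨β, hβt, hβU⟩ := hz
        have hmem' : (β : Ordinal.{0}) ∈ t' := Finset.mem_map.mpr ⟨β, hβt, rfl⟩
        obtain ⟨j, hj⟩ := iso.surjective ⟨(β : Ordinal.{0}), hmem'⟩
        have hωa : ω ∈ a (((iso j : _) : Ordinal.{0})) := Set.mem_iInter.mp hω j
        rw [hj] at hωa
        exact hωa hβU
      rw [hempty, measure_empty]
end

section
/- Let λ̄ = ⟨λ_ℓ : ℓ<n⟩ be a strictly decreasing sequence of infinite regular cardinals. Then for every J^bd_{λ̄}-positive set A ⊆ ∏_{ℓ<n} λ_ℓ and every k<ω there are sets B_ℓ ⊆ λ_ℓ with |B_ℓ| = k (for ℓ<n) such that ∏_{ℓ<n} B_ℓ ⊆ A. (Claim 4.6(3)) -/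
set_option linter.unusedVariables false

open Cardinal Set

section Claim463Helpers

lemma empty_mem_Jbd' {l : Ordinal.{0}} (hl : 0 < l) : (∅ : Set Ordinal.{0}) ∈ Jbd l :=
  ⟨by simp, 0, hl, by simp⟩

lemma ord_pos_of_aleph0 {c : Cardinal.{0}} (h : ℵ₀ ≤ c) : 0 < c.ord :=
  lt_of_lt_of_le Ordinal.omega0_pos
    (by rw [← Cardinal.ord_aleph0]; exact Cardinal.ord_le_ord.mpr h)

lemma seqpos_nonempty' : ∀ (m : ℕ) (lam : Fin m → Cardinal.{0}),
    (∀ ℓ, ℵ₀ ≤ lam ℓ) → ∀ X : Set (Fin m → Ordinal.{0}),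
    SeqPos m (fun ℓ S => S ∉ Jbd ((lam ℓ).ord)) X → X.Nonempty
  | 0, _, _, _, h => h
  | m+1, lam, hinf, X, h => by
      simp only [SeqPos] at h
      have hS : {a | SeqPos m (fun t S => S ∉ Jbd ((lam t.succ).ord))
          {f | Fin.cons a f ∈ X}}.Nonempty := by
        by_contra hne
        rw [Set.not_nonempty_iff_eq_empty] at hne
        exact h (by rw [hne]; exact empty_mem_Jbd' (ord_pos_of_aleph0 (hinf 0)))
      obtain ⟨a, ha⟩ := hS
      obtain ⟨f, hf⟩ := seqpos_nonempty' m (fun t => lam t.succ) (fun t => hinf t.succ) _ ha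
      exact ⟨Fin.cons a f, hf⟩

lemma pigeon463 {lam0 : Cardinal.{0}} (hreg : lam0.IsRegular) {T : Type} (hT : #T < lam0)
    {S : Set Ordinal.{0}} (hS : ∀ b < lam0.ord, ∃ α ∈ S, b ≤ α)
    (g : Ordinal.{0} → T) : ∃ t : T, ∀ b < lam0.ord, ∃ α ∈ S, g α = t ∧ b ≤ α := by
  by_contra hcon
  push_neg at hcon
  choose bf hb1 hb2 using hcon
  have hB : (⨆ t, bf t) < lam0.ord := by
    apply Ordinal.iSup_lt_ord _ hb1
    rwa [hreg.cof_eq]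
  obtain ⟨α, hαS, hα⟩ := hS _ hB
  exact absurd hα (not_le.mpr (lt_of_lt_of_le (hb2 (g α) α hαS rfl)
    (Ordinal.le_iSup bf (g α))))

lemma extract463 {l : Ordinal.{0}} (hl : 0 < l) (hlim : ∀ b < l, b + 1 < l)
    {S : Set Ordinal.{0}} (hsub : S ⊆ Set.Iio l) (hS : ∀ b < l, ∃ α ∈ S, b ≤ α) (k : ℕ) :
    ∃ F : Finset Ordinal.{0}, F.card = k ∧ ↑F ⊆ S := by
  induction k with
  | zero => exact ⟨∅, rfl, by simp⟩
  | succ k ih =>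
    obtain ⟨F, hcard, hFS⟩ := ih
    have hsup : F.sup id < l := by
      rw [Finset.sup_lt_iff (by rwa [Ordinal.bot_eq_zero])]
      intro x hx
      exact hsub (hFS hx)
    obtain ⟨α, hαS, hα⟩ := hS _ (hlim _ hsup)
    have hne : α ∉ F := by
      intro hmem
      have h1 : α ≤ F.sup id := Finset.le_sup (f := id) hmem
      have h2 : F.sup id < α := lt_of_lt_of_le (Order.lt_add_one_iff.mpr le_rfl) hα
      exact absurd h1 (not_le.mpr h2)
    refine ⟨insert α F, ?_, ?_⟩
    · rw [Finset.card_insert_of_notMem hne, hcard]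
    · intro x hx
      rcases Finset.mem_insert.mp hx with h | h
      · exact h ▸ hαS
      · exact hFS h

theorem claim_4_6_3_aux : ∀ (n : ℕ) (lam : Fin n → Cardinal.{0}),
    (∀ ℓ, (lam ℓ).IsRegular) → (∀ ℓ, ℵ₀ ≤ lam ℓ) →
    (∀ ℓ ℓ' : Fin n, ℓ < ℓ' → lam ℓ' < lam ℓ) →
    ∀ A : Set (Fin n → Ordinal.{0}),
    (∀ f ∈ A, ∀ ℓ, f ℓ < (lam ℓ).ord) →
    SeqPos n (fun ℓ S => S ∉ Jbd ((lam ℓ).ord)) A →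
    ∀ k : ℕ, ∃ B : Fin n → Finset Ordinal.{0},
      (∀ ℓ, (B ℓ).card = k) ∧ (∀ ℓ, ∀ x ∈ B ℓ, x < (lam ℓ).ord) ∧
      ∀ f : Fin n → Ordinal.{0}, (∀ ℓ, f ℓ ∈ B ℓ) → f ∈ A := by
  intro n
  induction n with
  | zero =>
    intro lam _ _ _ A _ hpos k
    obtain ⟨g, hg⟩ := hpos
    exact ⟨Fin.elim0, fun ℓ => ℓ.elim0, fun ℓ => ℓ.elim0,
      fun f _ => by rwa [Subsingleton.elim f g]⟩
  | succ n ih =>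
    intro lam hreg hinf hdec A hA hpos k
    classical
    set lam' : Fin n → Cardinal.{0} := fun t => lam t.succ with hlam'
    set S : Set Ordinal.{0} :=
      {a | SeqPos n (fun t S => S ∉ Jbd ((lam' t).ord)) {f | Fin.cons a f ∈ A}} with hSdef
    have hpos' : S ∉ Jbd ((lam 0).ord) := hpos
    -- S ⊆ Iio (lam 0).ord
    have hSsub : S ⊆ Set.Iio ((lam 0).ord) := by
      intro a ha
      obtain ⟨f, hf⟩ := seqpos_nonempty' n lam' (fun t => hinf t.succ) _ ha
      have := hA _ hf 0
      rwa [Fin.cons_zero] at this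
    -- S unbounded
    have hSunb : ∀ b < (lam 0).ord, ∃ α ∈ S, b ≤ α := by
      intro b hb
      by_contra hcon
      push_neg at hcon
      exact hpos' ⟨hSsub, b, hb, fun x hx => hcon x hx⟩
    -- chosen tuples
    have hchoice : ∀ a : Ordinal.{0}, ∃ B' : Fin n → Finset Ordinal.{0}, a ∈ S →
        ((∀ ℓ, (B' ℓ).card = k) ∧ (∀ ℓ, ∀ x ∈ B' ℓ, x < ((lam' ℓ)).ord) ∧
         ∀ f : Fin n → Ordinal.{0}, (∀ ℓ, f ℓ ∈ B' ℓ) → Fin.cons a f ∈ A) := by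
      intro a
      by_cases ha : a ∈ S
      · have ha' : SeqPos n (fun t S => S ∉ Jbd ((lam' t).ord)) {f | Fin.cons a f ∈ A} := ha
        obtain ⟨B', h1, h2, h3⟩ := ih lam' (fun t => hreg t.succ) (fun t => hinf t.succ)
          (fun t t' htt => hdec t.succ t'.succ (by simpa using htt))
          {f | Fin.cons a f ∈ A}
          (fun f hf ℓ => by
            have := hA _ hf ℓ.succ
            simpa using this) ha' k
        exact ⟨B', fun _ => ⟨h1, h2, h3⟩⟩
      · exact ⟨fun _ => ∅, fun h => (ha h).elim⟩
    choose Bf hBf using hchoice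
    -- the coding cardinal
    set μ : Cardinal.{0} := max ℵ₀ (Finset.univ.sup lam') with hμdef
    have hμinf : ℵ₀ ≤ μ := le_max_left _ _
    have hμord : ∀ t : Fin n, (lam' t).ord ≤ μ.ord := fun t =>
      Cardinal.ord_le_ord.mpr (le_trans (Finset.le_sup (Finset.mem_univ t)) (le_max_right _ _))
    have hμpos : 0 < μ.ord := ord_pos_of_aleph0 hμinf
    set X : Type := μ.ord.ToType with hXdef
    set T : Type := Fin n → Fin k → X with hTdef
    have hTcard : #T < lam 0 := by
      have hX : #X = μ := by rw [hXdef, Cardinal.mk_toType, Cardinal.card_ord]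
      have hT : #T = μ ^ (k * n : ℕ) := by
        rw [hTdef, ← Cardinal.power_def, ← Cardinal.power_def, Cardinal.mk_fin,
          Cardinal.mk_fin, ← Cardinal.power_mul, ← Nat.cast_mul, Cardinal.power_natCast, hX]
      rcases Nat.eq_zero_or_pos n with hn | hn
      · subst hn
        rw [hT, Nat.mul_zero, pow_zero]
        exact lt_of_lt_of_le Cardinal.one_lt_aleph0 (hinf 0)
      · have h1 : lam' ⟨0, hn⟩ < lam 0 := hdec 0 (⟨0, hn⟩ : Fin n).succ (by simp [Fin.lt_def])
        have haleph : ℵ₀ < lam 0 := lt_of_le_of_lt (hinf _) h1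
        have hsup : Finset.univ.sup lam' < lam 0 := by
          rw [Finset.sup_lt_iff (lt_of_le_of_lt (by simp) haleph)]
          intro t _
          exact hdec 0 t.succ (by simp [Fin.lt_def])
        have hμlt : μ < lam 0 := max_lt haleph hsup
        calc #T = μ ^ (k * n : ℕ) := hT
          _ ≤ μ := Cardinal.power_nat_le hμinf
          _ < lam 0 := hμlt
    -- encoding
    set enc : Ordinal.{0} → X := fun x =>
      if hx : x < μ.ord then Ordinal.ToType.mk ⟨x, hx⟩
      else Ordinal.ToType.mk ⟨0, hμpos⟩ with hencdef
    have hencinj : ∀ x y : Ordinal.{0}, x < μ.ord → y < μ.ord → enc x = enc y → x = y := by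
      intro x y hx hy hxy
      rw [hencdef] at hxy
      simp only [dif_pos hx, dif_pos hy] at hxy
      have := (Ordinal.ToType.mk).injective hxy
      exact Subtype.mk_eq_mk.mp this
    set code : Ordinal.{0} → T :=
      fun a ℓ i => enc ((Finset.sort (Bf a ℓ) (· ≤ ·)).getD i 0) with hcodedef
    obtain ⟨t, hfib⟩ := pigeon463 (hreg 0) hTcard hSunb code
    set S' : Set Ordinal.{0} := {a | a ∈ S ∧ code a = t} with hS'def
    have hS'unb : ∀ b < (lam 0).ord, ∃ α ∈ S', b ≤ α := by
      intro b hb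
      obtain ⟨α, h1, h2, h3⟩ := hfib b hb
      exact ⟨α, ⟨h1, h2⟩, h3⟩
    obtain ⟨α₀, hα₀⟩ : ∃ α, α ∈ S' := by
      obtain ⟨α, h1, _⟩ := hS'unb 0 (ord_pos_of_aleph0 (hinf 0))
      exact ⟨α, h1⟩
    -- key: all elements of S' have the same tuple
    have key : ∀ a ∈ S', Bf a = Bf α₀ := by
      intro a ha
      funext ℓ
      have hlen : ∀ b ∈ S', (Finset.sort (Bf b ℓ) (· ≤ ·)).length = k := by
        intro b hb
        rw [Finset.length_sort, (hBf b hb.1).1 ℓ]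
      have hlists : Finset.sort (Bf a ℓ) (· ≤ ·) = Finset.sort (Bf α₀ ℓ) (· ≤ ·) := by
        apply List.ext_getElem (by rw [hlen a ha, hlen α₀ hα₀])
        intro i hi1 hi2
        have hmem1 : (Finset.sort (Bf a ℓ) (· ≤ ·))[i] ∈ Bf a ℓ :=
          Finset.mem_sort _ |>.mp (List.getElem_mem hi1)
        have hmem2 : (Finset.sort (Bf α₀ ℓ) (· ≤ ·))[i] ∈ Bf α₀ ℓ :=
          Finset.mem_sort _ |>.mp (List.getElem_mem hi2)
        have hlt1 : (Finset.sort (Bf a ℓ) (· ≤ ·))[i] < μ.ord :=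
          lt_of_lt_of_le ((hBf a ha.1).2.1 ℓ _ hmem1) (hμord ℓ)
        have hlt2 : (Finset.sort (Bf α₀ ℓ) (· ≤ ·))[i] < μ.ord :=
          lt_of_lt_of_le ((hBf α₀ hα₀.1).2.1 ℓ _ hmem2) (hμord ℓ)
        have hik : i < k := by rw [← hlen a ha]; exact hi1
        have hcodes : code a ℓ ⟨i, hik⟩ = code α₀ ℓ ⟨i, hik⟩ := by
          rw [ha.2, hα₀.2]
        rw [hcodedef] at hcodes
        simp only at hcodes
        rw [List.getD_eq_getElem _ _ (by rw [hlen a ha]; exact hik),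
          List.getD_eq_getElem _ _ (by rw [hlen α₀ hα₀]; exact hik)] at hcodes
        exact hencinj _ _ hlt1 hlt2 hcodes
      have := congrArg (fun L : List Ordinal.{0} => L.toFinset) hlists
      simpa only [Finset.sort_toFinset] using this
    -- extract k elements of S'
    have hlim : ∀ b < (lam 0).ord, b + 1 < (lam 0).ord := by
      intro b hb
      have := (Cardinal.isSuccLimit_ord (hinf 0)).succ_lt hb
      rwa [Ordinal.add_one_eq_succ]
    have hS'sub : S' ⊆ Set.Iio ((lam 0).ord) := fun a ha => hSsub ha.1
    obtain ⟨F, hFcard, hFS'⟩ := extract463 (ord_pos_of_aleph0 (hinf 0)) hlim hS'sub hS'unb k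
    -- assemble
    refine ⟨fun ℓ => Fin.cases F (fun t => Bf α₀ t) ℓ, ?_, ?_, ?_⟩
    · intro ℓ
      induction ℓ using Fin.cases with
      | zero => simpa using hFcard
      | succ t => simpa using (hBf α₀ hα₀.1).1 t
    · intro ℓ x hx
      induction ℓ using Fin.cases with
      | zero =>
        simp only [Fin.cases_zero] at hx
        exact hSsub (hFS' hx).1
      | succ t =>
        simp only [Fin.cases_succ] at hx
        exact (hBf α₀ hα₀.1).2.1 t x hx
    · intro f hf
      have hf0 : f 0 ∈ S' := by
        have := hf 0
        simp only [Fin.cases_zero] at this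
        exact hFS' this
      have htail : ∀ u : Fin n, Fin.tail f u ∈ Bf (f 0) u := by
        intro u
        have := hf u.succ
        simp only [Fin.cases_succ] at this
        rw [key (f 0) hf0]
        exact this
      have := (hBf (f 0) hf0.1).2.2 (Fin.tail f) htail
      rwa [Fin.cons_self_tail] at this

end Claim463Helpers

/-- Claim 4.6(3). -/
theorem claim_4_6_3 (n : ℕ) (lam : Fin n → Cardinal.{0})
    (hreg : ∀ ℓ, (lam ℓ).IsRegular)
    (hinf : ∀ ℓ, ℵ₀ ≤ lam ℓ)
    (hdec : ∀ ℓ ℓ' : Fin n, ℓ < ℓ' → lam ℓ' < lam ℓ)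
    (A : Set (Fin n → Ordinal.{0}))
    (hA : ∀ f ∈ A, ∀ ℓ, f ℓ < (lam ℓ).ord)
    (hpos : SeqPos n (fun ℓ S => S ∉ Jbd ((lam ℓ).ord)) A)
    (k : ℕ) :
    ∃ B : Fin n → Finset Ordinal.{0},
      (∀ ℓ, (B ℓ).card = k) ∧ (∀ ℓ, ∀ x ∈ B ℓ, x < (lam ℓ).ord) ∧
      ∀ f : Fin n → Ordinal.{0}, (∀ ℓ, f ℓ ∈ B ℓ) → f ∈ A :=
  claim_4_6_3_aux n lam hreg hinf hdec A hA hpos k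
end
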